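/- Let R be an integral domain and let A be an evolution algebra over R with basis (x_i)_{i∈ι}. If the basis element x_i is nilpotent (some principal power x_i^n = 0 with n ≥ 1), then the diagonal structure coefficient C(i,i) is zero. -/
import Mathlib


/-!
Evolution algebra over a commutative ring `R` with basis `(x_i)_{i ∈ ι}`:
the underlying module is `ι →₀ R` (with `x_i = Finsupp.single i 1`), and the
structure coefficients are encoded by `Csq : ι → ι →₀ R`, where `Csq i` is the
element `x_i · x_i = ∑_k C(k,i) • x_k`; thus `C k i = Csq i k`.
The product is `(a · b) = ∑_i (a i * b i) • Csq i`, i.e.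
`(a · b)(k) = ∑_i a(i) * b(i) * C(k,i)`.
-/
noncomputable def evolMul {R : Type*} [CommRing R] {ι : Type*}
    (Csq : ι → ι →₀ R) (a b : ι →₀ R) : ι →₀ R :=
  a.sum fun i ai => (ai * b i) • Csq i

/-- Principal powers: `ppow mul a n = aⁿ` for `n ≥ 1`, defined by
`a^1 = a` and `a^{n+1} = a^n · a`. -/
def ppow {A : Type*} (mul : A → A → A) (a : A) : ℕ → A
  | 0 => a
  | 1 => a
  | n + 2 => mul (ppow mul a (n + 1)) a

/-- Over an integral domain `R`, if a basis element `x_i` of an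
evolution algebra is nilpotent (some principal power `x_iⁿ = 0` with `n ≥ 1`),
then the diagonal structure coefficient `C(i,i) = Csq i i` is zero. -/
theorem diagonal_coeff_zero_of_basis_nilpotent {R : Type*} [CommRing R] [IsDomain R]
    {ι : Type*} (Csq : ι → ι →₀ R) (i : ι)
    (h : ∃ n : ℕ, 1 ≤ n ∧ ppow (evolMul Csq) (Finsupp.single i 1) n = 0) :
    Csq i i = 0 := by
  have mul_single : ∀ a : ι →₀ R,
      evolMul Csq a (Finsupp.single i 1) = a i • Csq i := by
    intro a
    unfold evolMul
    rw [Finsupp.sum, Finset.sum_eq_single i]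
    · simp
    · intro j _ hj
      simp [Finsupp.single_apply, (Ne.symm hj : ¬ i = j)]
    · intro hi
      simp [Finsupp.notMem_support_iff.mp hi]
  have key : ∀ m : ℕ, (ppow (evolMul Csq) (Finsupp.single i 1) (m + 1)) i
      = (Csq i i) ^ m := by
    intro m
    induction m with
    | zero => simp [ppow]
    | succ k ih =>
      show (ppow (evolMul Csq) (Finsupp.single i 1) (k + 2)) i = _
      rw [show ppow (evolMul Csq) (Finsupp.single i 1) (k + 2)
          = evolMul Csq (ppow (evolMul Csq) (Finsupp.single i 1) (k + 1))
              (Finsupp.single i 1) from rfl,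
          mul_single, Finsupp.smul_apply, ih, smul_eq_mul, pow_succ]
  obtain ⟨n, hn1, hn0⟩ := h
  obtain ⟨m, rfl⟩ := Nat.exists_eq_add_of_le hn1
  have := key (m := m)
  rw [Nat.add_comm 1 m] at hn0
  rw [hn0] at this
  simp only [Finsupp.coe_zero, Pi.zero_apply] at this
  rcases Nat.eq_zero_or_pos m with rfl | hm
  · simp at this
  · exact pow_eq_zero_iff hm.ne' |>.mp this.symm
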